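/- arXiv:1709.06887 — 5 statements merged into one kernel-verified Lean document; each statement's English description precedes it below -/
import Mathlib

section
/- If C ⊆ V is such that the subgraph induced by C contains no edges (i.e., 1_Cᵀ A 1_C = 0) and vol(C) = vol(V)/2, then the Newman–Girvan modularity satisfies Q(C) = -vol(V)/4. Moreover, -vol(V)/4 is a lower bound for Q(C) over all subsets C ⊆ V. -/
/-!
Write `P(C) = ∑_{i,j ∈ C} A i j ≥ 0` and `s(C) = vol(C)`, so that `Q(C) = P(C) - s(C)² / vol(V)`.
The modularity matrix is symmetric with zero row sums, hence `Q(C) = Q(Cᶜ)`. Thus `Q(C)` is at least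
both `-s(C)² / vol(V)` and `-(vol(V) - s(C))² / vol(V)`, and the smaller of `s(C)`, `vol(V) - s(C)`
is at most `vol(V) / 2`.
-/

open Matrix Finset

variable {ι R : Type*}

theorem Matrix.indicator_dotProduct_mulVec_indicator [Fintype ι] [DecidableEq ι]
    [NonAssocSemiring R] (M : Matrix ι ι R) (C : Finset ι) :
    (fun i => if i ∈ C then (1 : R) else 0) ⬝ᵥ (M *ᵥ fun i => if i ∈ C then (1 : R) else 0) =
      ∑ i ∈ C, ∑ j ∈ C, M i j := by
  simp [dotProduct, mulVec, mul_ite, ite_mul, sum_ite_mem]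

/-- Each row of `M` sums to zero, so the `C × C` block of `M` is minus the `C × Cᶜ` block;
by symmetry the same holds with `C` and `Cᶜ` exchanged. -/
theorem Matrix.IsSymm.sum_sum_compl_eq_sum_sum [Fintype ι] [DecidableEq ι] [AddCommGroup R]
    {M : Matrix ι ι R} (hM : M.IsSymm) (hrow : ∀ i, ∑ j, M i j = 0) (C : Finset ι) :
    ∑ i ∈ Cᶜ, ∑ j ∈ Cᶜ, M i j = ∑ i ∈ C, ∑ j ∈ C, M i j := by
  have hblock : ∀ S : Finset ι, ∑ i ∈ S, ∑ j ∈ S, M i j = -∑ i ∈ S, ∑ j ∈ Sᶜ, M i j := by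
    intro S
    rw [← sum_neg_distrib]
    refine sum_congr rfl fun i _ => eq_neg_of_add_eq_zero_left ?_
    rw [sum_add_sum_compl, hrow]
  rw [hblock, hblock, compl_compl, neg_inj]
  exact sum_comm.trans (by simp only [hM.apply])

theorem Finset.sum_sum_sub_mul_div [Field R] (a : ι → ι → R) (d : ι → R) (v : R) (C : Finset ι) :
    ∑ i ∈ C, ∑ j ∈ C, (a i j - d i * d j / v) = ∑ i ∈ C, ∑ j ∈ C, a i j - (∑ i ∈ C, d i) ^ 2 / v := by
  simp only [sum_sub_distrib, sq, sum_mul_sum, sum_div]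

theorem neg_div_four_le_of_add_eq {s t v q : ℝ} (hs : 0 ≤ s) (ht : 0 ≤ t) (hst : s + t = v)
    (hqs : -(s ^ 2 / v) ≤ q) (hqt : -(t ^ 2 / v) ≤ q) : -v / 4 ≤ q := by
  rcases (hst ▸ add_nonneg hs ht).eq_or_lt with rfl | hv
  · simpa using hqs
  wlog hle : s ≤ t generalizing s t
  · exact this ht hs (by linarith) hqt hqs (by linarith)
  have : s ^ 2 / v ≤ v / 4 := by
    rw [div_le_div_iff₀ (by linarith) (by norm_num)]
    nlinarith
  linarith

/-- If the subgraph induced by `C` has no edges and `vol(C) = vol(V)/2`, then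
`Q(C) = -vol(V)/4`; moreover `-vol(V)/4` is a lower bound for `Q` over all subsets. -/
theorem ng_modularity_bipartite_bound
    (n : ℕ) (A : Matrix (Fin n) (Fin n) ℝ)
    (hAsym : A.IsSymm) (hA0 : ∀ i j, 0 ≤ A i j)
    (d : Fin n → ℝ) (hd : d = A *ᵥ 1)
    (vol : ℝ) (hvol : vol = ∑ i, d i) (hvolpos : 0 < vol)
    (M : Matrix (Fin n) (Fin n) ℝ)
    (hM : M = A - Matrix.of (fun i j => d i * d j / vol))
    (Q : Finset (Fin n) → ℝ)
    (hQ : ∀ C : Finset (Fin n),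
      Q C = (fun i => if i ∈ C then (1:ℝ) else 0) ⬝ᵥ
            (M *ᵥ fun i => if i ∈ C then (1:ℝ) else 0))
    (C : Finset (Fin n))
    (hCempty : (fun i => if i ∈ C then (1:ℝ) else 0) ⬝ᵥ
               (A *ᵥ fun i => if i ∈ C then (1:ℝ) else 0) = 0)
    (hChalf : ∑ i ∈ C, d i = vol / 2) :
    Q C = -vol / 4 ∧ ∀ C' : Finset (Fin n), -vol / 4 ≤ Q C' := by
  have hdeg : ∀ i, ∑ j, A i j = d i := fun i => by simp [hd, mulVec, dotProduct]
  have hd0 : ∀ i, 0 ≤ d i := fun i => hdeg i ▸ sum_nonneg fun j _ => hA0 i j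
  have hMsymm : M.IsSymm := hM ▸ hAsym.sub (IsSymm.ext fun i j => by simp [mul_comm])
  have hMrow : ∀ i, ∑ j, M i j = 0 := fun i => by
    simp [hM, sum_sub_distrib, hdeg, ← mul_sum, ← sum_div, ← hvol, hvolpos.ne']
  have hQA : ∀ C', Q C' = ∑ i ∈ C', ∑ j ∈ C', A i j - (∑ i ∈ C', d i) ^ 2 / vol := fun C' => by
    rw [hQ, indicator_dotProduct_mulVec_indicator, hM]
    exact sum_sum_sub_mul_div A d vol C'
  have hQcompl : ∀ C', Q C'ᶜ = Q C' := fun C' => by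
    simp only [hQ, indicator_dotProduct_mulVec_indicator, hMsymm.sum_sum_compl_eq_sum_sum hMrow]
  have hQge : ∀ C', -((∑ i ∈ C', d i) ^ 2 / vol) ≤ Q C' := fun C' => by
    rw [hQA]
    linarith [sum_nonneg fun i (_ : i ∈ C') => sum_nonneg fun j (_ : j ∈ C') => hA0 i j]
  refine ⟨?_, fun C' => ?_⟩
  · rw [hQA, ← indicator_dotProduct_mulVec_indicator, hCempty, hChalf]
    field_simp
    ring
  · refine neg_div_four_le_of_add_eq (sum_nonneg fun i _ => hd0 i) (sum_nonneg fun i _ => hd0 i)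
      (hvol ▸ sum_add_sum_compl C' d) (hQge C') ?_
    exact hQcompl C' ▸ hQge C'ᶜ
end

section
/- Hoffman–Wielandt inequality for singular values: if A and B are n×n real matrices with singular values s₁(A) ≥ … ≥ sₙ(A) and s₁(B) ≥ … ≥ sₙ(B), then ∑_{i=1}^n (sᵢ(A) - sᵢ(B))² ≤ ‖A - B‖_F². -/
/-!
Expanding the square, `‖A - B‖_F² = ‖sA‖² + ‖sB‖² - 2 tr (A Bᵀ)`, so the claim is von Neumann's
trace inequality `tr (A Bᵀ) ≤ ∑ sA i * sB i`. With the orthogonal matrices `P = VAᵀ VB` and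
`Q = UAᵀ UB` one has `tr (A Bᵀ) = ∑ᵢⱼ sA i * (P i j * Q i j) * sB j`, and `P i j * Q i j` is at most
the average of `P i j ^ 2` and `Q i j ^ 2`. The matrices of squared entries of `P` and `Q` are doubly
stochastic, hence by Birkhoff's theorem convex combinations of permutation matrices, on which the
rearrangement inequality bounds the bilinear form by `∑ sA i * sB i`.
-/

open Matrix Finset

namespace Matrix

section Frobenius

variable {m n R : Type*} [Fintype m] [Fintype n]

theorem sum_sum_sq_eq_trace_mul_transpose [Semiring R] (M : Matrix m n R) :
    ∑ i, ∑ j, M i j ^ 2 = trace (M * Mᵀ) := by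
  simp only [sq]
  exact sum_hadamard_eq M M

theorem trace_sub_mul_transpose_sub [CommRing R] (A B : Matrix m n R) :
    trace ((A - B) * (A - B)ᵀ) = trace (A * Aᵀ) + trace (B * Bᵀ) - 2 * trace (A * Bᵀ) := by
  have hBA : trace (B * Aᵀ) = trace (A * Bᵀ) := by
    rw [← trace_transpose, transpose_mul, transpose_transpose]
  simp only [transpose_sub, Matrix.sub_mul, Matrix.mul_sub, trace_sub, hBA]
  ring

end Frobenius

variable {ι R : Type*} [Fintype ι]

theorem sum_sub_sq_eq_dotProduct [CommRing R] (a b : ι → R) :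
    ∑ i, (a i - b i) ^ 2 = a ⬝ᵥ a + b ⬝ᵥ b - 2 * (a ⬝ᵥ b) := by
  simp only [dotProduct, sub_sq, Finset.sum_add_distrib, Finset.sum_sub_distrib, Finset.mul_sum]
  ring_nf

theorem two_mul_vecMul_hadamard_dotProduct_le [CommRing R] [LinearOrder R] [IsStrictOrderedRing R]
    {a b : ι → R} (ha : 0 ≤ a) (hb : 0 ≤ b) (P Q : Matrix ι ι R) :
    2 * (a ᵥ* (P ⊙ Q) ⬝ᵥ b) ≤ a ᵥ* (P ⊙ P) ⬝ᵥ b + a ᵥ* (Q ⊙ Q) ⬝ᵥ b := by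
  simp only [dotProduct, vecMul, hadamard_apply, Finset.sum_mul, Finset.mul_sum,
    ← Finset.sum_add_distrib]
  gcongr with j _ i _
  nlinarith [mul_nonneg (mul_nonneg (ha i) (hb j)) (sq_nonneg (P i j - Q i j))]

variable [DecidableEq ι]

theorem _root_.Monovary.vecMul_dotProduct_le_of_mem_doublyStochastic [Field R] [LinearOrder R]
    [IsStrictOrderedRing R] {a b : ι → R} (hab : Monovary a b) {S : Matrix ι ι R}
    (hS : S ∈ doublyStochastic R ι) : a ᵥ* S ⬝ᵥ b ≤ a ⬝ᵥ b := by
  have hlin : IsLinearMap R fun M : Matrix ι ι R => a ᵥ* M ⬝ᵥ b :=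
    ⟨fun M N => by simp only [vecMul_add, add_dotProduct],
      fun c M => by simp only [vecMul_smul, smul_dotProduct]⟩
  rw [← SetLike.mem_coe, doublyStochastic_eq_convexHull_permMatrix] at hS
  refine convexHull_min ?_ (convex_halfSpace_le hlin (a ⬝ᵥ b)) hS
  rintro _ ⟨σ, rfl⟩
  simpa [vecMul_permMatrix, dotProduct] using hab.sum_comp_perm_mul_le_sum_mul (σ := σ.symm)

theorem hadamard_self_mem_doublyStochastic [CommRing R] [LinearOrder R] [IsStrictOrderedRing R]
    {P : Matrix ι ι R} (hP : Pᵀ * P = 1) : P ⊙ P ∈ doublyStochastic R ι := by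
  refine mem_doublyStochastic_iff_sum.mpr
    ⟨fun i j => mul_self_nonneg (P i j), fun i => ?_, fun j => ?_⟩
  · simpa [mul_apply, one_apply] using congr_fun₂ (mul_eq_one_comm.mp hP : P * Pᵀ = 1) i i
  · simpa [mul_apply, one_apply] using congr_fun₂ hP j j

theorem transpose_mul_transpose_mul_self_eq_one [CommRing R] {U V : Matrix ι ι R}
    (hU : Uᵀ * U = 1) (hV : Vᵀ * V = 1) : (Uᵀ * V)ᵀ * (Uᵀ * V) = 1 := by
  rw [transpose_mul, transpose_transpose, Matrix.mul_assoc, ← Matrix.mul_assoc U,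
    mul_eq_one_comm.mp hU, Matrix.one_mul, hV]

theorem trace_svd_mul_transpose_svd [CommRing R] (U₁ V₁ U₂ V₂ : Matrix ι ι R) (a b : ι → R) :
    trace (U₁ * diagonal a * V₁ᵀ * (U₂ * diagonal b * V₂ᵀ)ᵀ) =
      a ᵥ* ((V₁ᵀ * V₂) ⊙ (U₁ᵀ * U₂)) ⬝ᵥ b := by
  simp only [dotProduct_vecMul_hadamard, transpose_mul, transpose_transpose, diagonal_transpose,
    Matrix.mul_assoc]
  rw [trace_mul_comm]
  simp only [Matrix.mul_assoc]

theorem trace_svd_mul_transpose_self [CommRing R] {U V : Matrix ι ι R} (hU : Uᵀ * U = 1)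
    (hV : Vᵀ * V = 1) (a : ι → R) :
    trace (U * diagonal a * Vᵀ * (U * diagonal a * Vᵀ)ᵀ) = a ⬝ᵥ a := by
  rw [trace_svd_mul_transpose_svd, hU, hV, hadamard_one, diag_one, Pi.one_def, diagonal_one,
    vecMul_one]

theorem trace_svd_mul_transpose_svd_le [Field R] [LinearOrder R] [IsStrictOrderedRing R]
    {U₁ V₁ U₂ V₂ : Matrix ι ι R} (hU₁ : U₁ᵀ * U₁ = 1) (hV₁ : V₁ᵀ * V₁ = 1)
    (hU₂ : U₂ᵀ * U₂ = 1) (hV₂ : V₂ᵀ * V₂ = 1) {a b : ι → R} (ha : 0 ≤ a) (hb : 0 ≤ b)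
    (hab : Monovary a b) :
    trace (U₁ * diagonal a * V₁ᵀ * (U₂ * diagonal b * V₂ᵀ)ᵀ) ≤ a ⬝ᵥ b := by
  rw [trace_svd_mul_transpose_svd]
  set P := V₁ᵀ * V₂
  set Q := U₁ᵀ * U₂
  have hP := hadamard_self_mem_doublyStochastic (transpose_mul_transpose_mul_self_eq_one hV₁ hV₂)
  have hQ := hadamard_self_mem_doublyStochastic (transpose_mul_transpose_mul_self_eq_one hU₁ hU₂)
  have hPQ := two_mul_vecMul_hadamard_dotProduct_le ha hb P Q
  linarith [hab.vecMul_dotProduct_le_of_mem_doublyStochastic hP,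
    hab.vecMul_dotProduct_le_of_mem_doublyStochastic hQ]

end Matrix

/-- Hoffman–Wielandt inequality for singular values:
`∑ᵢ (sᵢ(A) - sᵢ(B))² ≤ ‖A - B‖_F²`. -/
theorem hoffman_wielandt_singular_values
    (n : ℕ) (A B : Matrix (Fin n) (Fin n) ℝ)
    (sA sB : Fin n → ℝ)
    (hsA0 : ∀ i, 0 ≤ sA i) (hsB0 : ∀ i, 0 ≤ sB i)
    (hsAmono : ∀ i j : Fin n, i ≤ j → sA j ≤ sA i)
    (hsBmono : ∀ i j : Fin n, i ≤ j → sB j ≤ sB i)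
    (UA VA UB VB : Matrix (Fin n) (Fin n) ℝ)
    (hUA : UAᵀ * UA = 1) (hVA : VAᵀ * VA = 1)
    (hUB : UBᵀ * UB = 1) (hVB : VBᵀ * VB = 1)
    (hA : A = UA * Matrix.diagonal sA * VAᵀ)
    (hB : B = UB * Matrix.diagonal sB * VBᵀ) :
    ∑ i, (sA i - sB i) ^ 2 ≤ ∑ r, ∑ c, (A r c - B r c) ^ 2 := by
  have hmono : Monovary sA sB :=
    Antitone.monovary (fun i j => hsAmono i j) (fun i j => hsBmono i j)
  have hvonNeumann : trace (A * Bᵀ) ≤ sA ⬝ᵥ sB := by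
    rw [hA, hB]
    exact trace_svd_mul_transpose_svd_le hUA hVA hUB hVB hsA0 hsB0 hmono
  have hAA : trace (A * Aᵀ) = sA ⬝ᵥ sA := by rw [hA]; exact trace_svd_mul_transpose_self hUA hVA sA
  have hBB : trace (B * Bᵀ) = sB ⬝ᵥ sB := by rw [hB]; exact trace_svd_mul_transpose_self hUB hVB sB
  calc ∑ i, (sA i - sB i) ^ 2
      = sA ⬝ᵥ sA + sB ⬝ᵥ sB - 2 * (sA ⬝ᵥ sB) := sum_sub_sq_eq_dotProduct sA sB
    _ ≤ trace (A * Aᵀ) + trace (B * Bᵀ) - 2 * trace (A * Bᵀ) := by linarith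
    _ = ∑ r, ∑ c, (A - B) r c ^ 2 := by
      rw [sum_sum_sq_eq_trace_mul_transpose, trace_sub_mul_transpose_sub]
end

section
/- In the setting above, there exists a k×k orthogonal matrix Z such that ‖U₁ − XZ‖_F ≤ (√2 ‖M‖_F/|λ_k|) · sin(M, H(X)). -/
open Matrix Finset

/-!
Squared Frobenius norms appear as `(Aᵀ * A).trace`; write `P = 1 - X Xᵀ`. Since `M U₁ = U₁ Λ₁`
with `|λⱼ| ≥ |λₖ|` on the leading block and `P H = 0`,
`λₖ² ‖P U₁‖² ≤ ‖P U₁ Λ₁‖² = ‖P (M - H) U₁‖² ≤ ‖M - H‖²`.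
On the other hand `A = Xᵀ U₁` is a contraction; taking for `Z` the orthogonal factor of its singular
value decomposition, `tr (Zᵀ A) = ∑ σᵢ ≥ ∑ σᵢ² = ‖A‖²`, hence
`‖U₁ - X Z‖² = 2k - 2 tr (Zᵀ A) ≤ 2 (k - ‖A‖²) = 2 ‖P U₁‖²`.
-/

namespace Matrix

theorem sum_sum_sq_eq_trace_transpose_mul_self {m n : Type*} [Fintype m] [Fintype n]
    (A : Matrix m n ℝ) : ∑ i, ∑ j, A i j ^ 2 = (Aᵀ * A).trace := by
  rw [trace, Finset.sum_comm]
  simp [mul_apply, sq]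

theorem trace_transpose_mul_self_nonneg {m n : Type*} [Fintype m] [Fintype n]
    (A : Matrix m n ℝ) : 0 ≤ (Aᵀ * A).trace := by
  rw [← sum_sum_sq_eq_trace_transpose_mul_self]
  positivity

theorem trace_transpose_mul_self_pos {m n : Type*} [Fintype m] [Fintype n]
    {A : Matrix m n ℝ} (hA : A ≠ 0) : 0 < (Aᵀ * A).trace :=
  (trace_transpose_mul_self_nonneg A).lt_of_ne' fun h =>
    hA (trace_conjTranspose_mul_self_eq_zero_iff.mp (by simpa using h))

theorem sq_mul_trace_le_trace_mul_diagonal {m n : Type*} [Fintype m] [Fintype n] [DecidableEq n]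
    (B : Matrix m n ℝ) {c : ℝ} {μ : n → ℝ} (hμ : ∀ j, |c| ≤ |μ j|) :
    c ^ 2 * (Bᵀ * B).trace ≤ ((B * diagonal μ)ᵀ * (B * diagonal μ)).trace := by
  simp only [← sum_sum_sq_eq_trace_transpose_mul_self, mul_diagonal, Finset.mul_sum, mul_pow]
  refine Finset.sum_le_sum fun i _ => Finset.sum_le_sum fun j _ => ?_
  rw [mul_comm]
  exact mul_le_mul_of_nonneg_left (sq_le_sq.mpr (hμ j)) (sq_nonneg _)

section OrthonormalColumns

variable {m k : Type*} [Fintype m] [Fintype k] [DecidableEq m] [DecidableEq k]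
  {X : Matrix m k ℝ}

theorem one_sub_mul_transpose_mul_eq_zero (hX : Xᵀ * X = 1) : (1 - X * Xᵀ) * X = 0 := by
  rw [Matrix.sub_mul, Matrix.mul_assoc, hX, Matrix.one_mul, Matrix.mul_one, sub_self]

/-- Pythagoras for the splitting `1 = X Xᵀ + (1 - X Xᵀ)` into complementary orthogonal
projections. -/
theorem transpose_mul_self_eq_add (hX : Xᵀ * X = 1) {n : Type*} (B : Matrix m n ℝ) :
    Bᵀ * B = (Xᵀ * B)ᵀ * (Xᵀ * B) + ((1 - X * Xᵀ) * B)ᵀ * ((1 - X * Xᵀ) * B) := by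
  have hP : (1 - X * Xᵀ)ᵀ * (1 - X * Xᵀ) = 1 - X * Xᵀ := by
    rw [transpose_sub, transpose_one, transpose_mul, transpose_transpose, Matrix.mul_sub,
      Matrix.mul_one, ← Matrix.mul_assoc, one_sub_mul_transpose_mul_eq_zero hX, Matrix.zero_mul,
      sub_zero]
  rw [transpose_mul ((1 - X * Xᵀ)), Matrix.mul_assoc, ← Matrix.mul_assoc (1 - X * Xᵀ)ᵀ, hP]
  simp only [transpose_mul, transpose_transpose, Matrix.mul_sub, Matrix.sub_mul, Matrix.one_mul,
    Matrix.mul_assoc]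
  abel

theorem trace_transpose_mul_le (hX : Xᵀ * X = 1) {n : Type*} [Fintype n] (B : Matrix m n ℝ) :
    ((Xᵀ * B)ᵀ * (Xᵀ * B)).trace ≤ (Bᵀ * B).trace := by
  rw [transpose_mul_self_eq_add hX B, trace_add]
  linarith [trace_transpose_mul_self_nonneg ((1 - X * Xᵀ) * B)]

theorem trace_one_sub_mul_transpose_mul_le (hX : Xᵀ * X = 1) {n : Type*} [Fintype n]
    (B : Matrix m n ℝ) :
    (((1 - X * Xᵀ) * B)ᵀ * ((1 - X * Xᵀ) * B)).trace ≤ (Bᵀ * B).trace := by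
  rw [transpose_mul_self_eq_add hX B, trace_add]
  linarith [trace_transpose_mul_self_nonneg (Xᵀ * B)]

theorem trace_mul_le (hX : Xᵀ * X = 1) {n : Type*} [Fintype n] (C : Matrix n m ℝ) :
    ((C * X)ᵀ * (C * X)).trace ≤ (Cᵀ * C).trace := by
  have := trace_transpose_mul_le hX Cᵀ
  rwa [← transpose_mul, transpose_transpose, transpose_transpose, trace_mul_comm,
    trace_mul_comm C] at this

theorem one_sub_mul_transpose_mul_sum_smul_vecMulVec (hX : Xᵀ * X = 1) (q : k → ℝ) :
    (1 - X * Xᵀ) * ∑ i, q i • vecMulVec (fun r => X r i) (fun r => X r i) = 0 := by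
  rw [Finset.mul_sum]
  refine Finset.sum_eq_zero fun i _ => ?_
  have hcol : (fun r => X r i) = X *ᵥ Pi.single i 1 := (mulVec_single_one X i).symm
  rw [Matrix.mul_smul, mul_vecMulVec, hcol, mulVec_mulVec, one_sub_mul_transpose_mul_eq_zero hX,
    zero_mulVec, zero_vecMulVec, smul_zero]

end OrthonormalColumns

section ColumnSubmatrix

variable {R m k : Type*} [Semiring R] [Fintype m] [DecidableEq m] [DecidableEq k]
  {U : Matrix m m R} {f : k → m}

theorem transpose_submatrix_mul_submatrix_eq_one (hU : Uᵀ * U = 1) (hf : Function.Injective f) :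
    (U.submatrix id f)ᵀ * U.submatrix id f = 1 := by
  rw [transpose_submatrix, ← submatrix_mul _ _ _ _ _ Function.bijective_id, hU, submatrix_one _ hf]

theorem mul_submatrix_eq_submatrix_mul_diagonal [Fintype k] {M : Matrix m m R} {μ : m → R}
    (hMU : M * U = U * diagonal μ) :
    M * U.submatrix id f = U.submatrix id f * diagonal (μ ∘ f) := by
  rw [← submatrix_id_id M, ← submatrix_mul _ _ _ _ _ Function.bijective_id, hMU]
  ext i j
  simp [mul_diagonal]

end ColumnSubmatrix

theorem ne_zero_of_mul_eq_mul_diagonal {R m k : Type*} [Semiring R] [Fintype m] [Fintype k]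
    [DecidableEq k] {M : Matrix m m R} {V : Matrix m k R}
    (hV : Vᵀ * V = 1) {μ : k → R} (hMV : M * V = V * diagonal μ) {j : k} (hj : μ j ≠ 0) :
    M ≠ 0 := by
  rintro rfl
  have hμ : diagonal μ = 0 := by
    rw [← Matrix.one_mul (diagonal μ), ← hV, Matrix.mul_assoc, ← hMV, Matrix.zero_mul,
      Matrix.mul_zero]
  exact hj (by simpa using congrFun (congrFun hμ j) j)

section SingularValueDecomposition

variable {l : Type*} [Fintype l] [DecidableEq l]

theorem transpose_mul_self_eq_one_of_mem_unitaryGroup {V : Matrix l l ℝ}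
    (hV : V ∈ unitaryGroup l ℝ) : Vᵀ * V = 1 := by
  simpa [star_eq_conjTranspose] using mem_unitaryGroup_iff'.mp hV

theorem IsHermitian.transpose_eigenvectorUnitary_mul_mul {S : Matrix l l ℝ}
    (hS : S.IsHermitian) :
    (hS.eigenvectorUnitary : Matrix l l ℝ)ᵀ * S * hS.eigenvectorUnitary =
      diagonal hS.eigenvalues := by
  simpa [star_eq_conjTranspose] using hS.conjStarAlgAut_star_eigenvectorUnitary

/-- The normalised columns with `d i ≠ 0` extend to an orthonormal basis. -/
theorem exists_orthogonal_eq_mul_diagonal_sqrt (B : Matrix l l ℝ) (d : l → ℝ)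
    (hB : Bᵀ * B = diagonal d) :
    ∃ W : Matrix l l ℝ, Wᵀ * W = 1 ∧ B = W * diagonal fun i => √(d i) := by
  have hcol : ∀ i j, Bᵀ i ⬝ᵥ Bᵀ j = diagonal d i j := fun i j => by
    rw [← hB, mul_apply']; rfl
  have hd : ∀ i, 0 ≤ d i := fun i => by
    simpa [hcol i i] using dotProduct_self_star_nonneg (Bᵀ i)
  let v : l → EuclideanSpace ℝ l := fun i => WithLp.toLp 2 (Bᵀ i)
  have hv : Orthonormal ℝ (Set.domRestrict {i | d i ≠ 0} fun i => (√(d i))⁻¹ • v i) := by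
    rw [orthonormal_iff_ite]
    rintro ⟨i, hi⟩ ⟨j, hj⟩
    simp only [Set.domRestrict_apply, inner_smul_left, inner_smul_right, v,
      EuclideanSpace.inner_eq_star_dotProduct]
    simp only [star_trivial, conj_trivial, hcol]
    by_cases hij : i = j
    · subst hij
      have : √(d i) ≠ 0 := Real.sqrt_ne_zero'.mpr ((hd i).lt_of_ne' hi)
      rw [diagonal_apply_eq, if_pos rfl]
      field_simp
      exact (Real.sq_sqrt (hd i)).symm
    · simp [hij, Ne.symm hij]
  obtain ⟨b, hb⟩ := hv.exists_orthonormalBasis_extension_of_card_eq (by simp)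
  have hW : ∀ r i, (EuclideanSpace.basisFun l ℝ).toBasis.toMatrix b.toBasis r i = b i r :=
    fun _ _ => rfl
  refine ⟨(EuclideanSpace.basisFun l ℝ).toBasis.toMatrix b.toBasis,
    transpose_mul_self_eq_one_of_mem_unitaryGroup
      ((EuclideanSpace.basisFun l ℝ).toMatrix_orthonormalBasis_mem_unitary b), ?_⟩
  ext r i
  rw [mul_diagonal, hW]
  by_cases hi : d i = 0
  · have : Bᵀ i = 0 := dotProduct_self_eq_zero.mp (by rw [hcol]; simpa using hi)
    simpa [hi] using congrFun this r
  · rw [hb i hi]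
    have : √(d i) ≠ 0 := Real.sqrt_ne_zero'.mpr ((hd i).lt_of_ne' hi)
    simp [v]
    field_simp

theorem exists_svd (A : Matrix l l ℝ) :
    ∃ (W V : Matrix l l ℝ) (σ : l → ℝ), Wᵀ * W = 1 ∧ Vᵀ * V = 1 ∧ (∀ i, 0 ≤ σ i) ∧
      A = W * diagonal σ * Vᵀ := by
  have hS : (Aᵀ * A).IsHermitian := by
    simpa [conjTranspose_eq_transpose_of_trivial] using isHermitian_conjTranspose_mul_self A
  set V : Matrix l l ℝ := (hS.eigenvectorUnitary : Matrix l l ℝ)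
  have hV : Vᵀ * V = 1 := transpose_mul_self_eq_one_of_mem_unitaryGroup hS.eigenvectorUnitary.2
  have hAV : (A * V)ᵀ * (A * V) = diagonal hS.eigenvalues := by
    rw [← hS.transpose_eigenvectorUnitary_mul_mul, transpose_mul]
    simp only [Matrix.mul_assoc]
    rfl
  obtain ⟨W, hW, hAVW⟩ := exists_orthogonal_eq_mul_diagonal_sqrt (A * V) _ hAV
  refine ⟨W, V, fun i => √(hS.eigenvalues i), hW, hV, fun i => Real.sqrt_nonneg _, ?_⟩
  rw [← hAVW, Matrix.mul_assoc, mul_eq_one_comm.mp hV, Matrix.mul_one]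

/-- Polar decomposition `A = Z |A|`: for a contraction, `tr |A| ≥ tr (Aᵀ A)` because the singular
values lie in `[0, 1]`. -/
theorem exists_orthogonal_trace_transpose_mul_self_le (A : Matrix l l ℝ)
    (hA : (1 - Aᵀ * A).PosSemidef) :
    ∃ Z : Matrix l l ℝ, Zᵀ * Z = 1 ∧ (Aᵀ * A).trace ≤ (Zᵀ * A).trace := by
  obtain ⟨W, V, σ, hW, hV, hσ, rfl⟩ := exists_svd A
  have hV' : V * Vᵀ = 1 := mul_eq_one_comm.mp hV
  have htrace : ∀ D : Matrix l l ℝ, (V * D * Vᵀ).trace = D.trace := fun D => by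
    rw [trace_mul_cycle, hV, Matrix.one_mul]
  have hAA : (W * diagonal σ * Vᵀ)ᵀ * (W * diagonal σ * Vᵀ) =
      V * diagonal (fun i => σ i * σ i) * Vᵀ := by
    rw [← diagonal_mul_diagonal]
    simp only [transpose_mul, transpose_transpose, diagonal_transpose, Matrix.mul_assoc]
    rw [← Matrix.mul_assoc Wᵀ, hW, Matrix.one_mul]
  have hZA : (W * Vᵀ)ᵀ * (W * diagonal σ * Vᵀ) = V * diagonal σ * Vᵀ := by
    simp only [transpose_mul, transpose_transpose, Matrix.mul_assoc]
    rw [← Matrix.mul_assoc Wᵀ, hW, Matrix.one_mul]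
  have hσ1 : ∀ i, σ i * σ i ≤ 1 := fun i => by
    have := (hA.conjTranspose_mul_mul_same V).diag_nonneg (i := i)
    have hconj : Vᴴ * (1 - V * diagonal (fun i => σ i * σ i) * Vᵀ) * V =
        diagonal fun i => 1 - σ i * σ i := by
      rw [conjTranspose_eq_transpose_of_trivial, Matrix.mul_sub, Matrix.sub_mul, Matrix.mul_one,
        hV, ← Matrix.mul_assoc, ← Matrix.mul_assoc, hV, Matrix.one_mul, Matrix.mul_assoc, hV,
        Matrix.mul_one, ← diagonal_one, diagonal_sub]
    rw [hAA, hconj, diagonal_apply_eq] at this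
    linarith
  refine ⟨W * Vᵀ, ?_, ?_⟩
  · rw [transpose_mul, transpose_transpose, Matrix.mul_assoc, ← Matrix.mul_assoc Wᵀ, hW,
      Matrix.one_mul, hV']
  · rw [hAA, hZA, htrace, htrace, trace_diagonal, trace_diagonal]
    exact Finset.sum_le_sum fun i _ => by
      nlinarith [hσ i, hσ1 i]

end SingularValueDecomposition

theorem exists_orthogonal_trace_sub_mul_le {m k : Type*} [Fintype m] [Fintype k] [DecidableEq m]
    [DecidableEq k] {X U : Matrix m k ℝ} (hX : Xᵀ * X = 1) (hU : Uᵀ * U = 1) :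
    ∃ Z : Matrix k k ℝ, Zᵀ * Z = 1 ∧
      ((U - X * Z)ᵀ * (U - X * Z)).trace ≤
        2 * (((1 - X * Xᵀ) * U)ᵀ * ((1 - X * Xᵀ) * U)).trace := by
  have hsplit := transpose_mul_self_eq_add hX U
  rw [hU] at hsplit
  have hA : (1 - (Xᵀ * U)ᵀ * (Xᵀ * U)).PosSemidef := by
    rw [hsplit, add_sub_cancel_left, ← conjTranspose_eq_transpose_of_trivial]
    exact posSemidef_conjTranspose_mul_self _
  obtain ⟨Z, hZ, htr⟩ := exists_orthogonal_trace_transpose_mul_self_le _ hA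
  refine ⟨Z, hZ, ?_⟩
  have hexp : (U - X * Z)ᵀ * (U - X * Z) = 1 + 1 - (Zᵀ * (Xᵀ * U))ᵀ - Zᵀ * (Xᵀ * U) := by
    simp only [transpose_sub, transpose_mul, transpose_transpose, Matrix.sub_mul, Matrix.mul_sub,
      Matrix.mul_assoc]
    rw [hU, ← Matrix.mul_assoc Xᵀ X, hX, Matrix.one_mul, hZ]
    abel
  rw [hexp, trace_sub, trace_sub, trace_add, trace_transpose, congrArg trace hsplit, trace_add]
  linarith

theorem sq_mul_trace_le_of_mul_eq_mul_diagonal {m k k' : Type*} [Fintype m] [Fintype k]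
    [Fintype k'] [DecidableEq m] [DecidableEq k] [DecidableEq k'] {X : Matrix m k' ℝ}
    (hX : Xᵀ * X = 1) {U : Matrix m k ℝ} (hU : Uᵀ * U = 1) {M H : Matrix m m ℝ} {μ : k → ℝ}
    (hMU : M * U = U * diagonal μ) (hH : (1 - X * Xᵀ) * H = 0) {c : ℝ} (hμ : ∀ j, |c| ≤ |μ j|) :
    c ^ 2 * (((1 - X * Xᵀ) * U)ᵀ * ((1 - X * Xᵀ) * U)).trace ≤ ((M - H)ᵀ * (M - H)).trace :=
  calc c ^ 2 * (((1 - X * Xᵀ) * U)ᵀ * ((1 - X * Xᵀ) * U)).trace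
      ≤ (((1 - X * Xᵀ) * U * diagonal μ)ᵀ * ((1 - X * Xᵀ) * U * diagonal μ)).trace :=
        sq_mul_trace_le_trace_mul_diagonal _ hμ
    _ = (((1 - X * Xᵀ) * (M - H) * U)ᵀ * ((1 - X * Xᵀ) * (M - H) * U)).trace := by
        rw [Matrix.mul_sub, hH, sub_zero, Matrix.mul_assoc _ M, hMU, Matrix.mul_assoc]
    _ ≤ (((1 - X * Xᵀ) * (M - H))ᵀ * ((1 - X * Xᵀ) * (M - H))).trace := trace_mul_le hU _
    _ ≤ ((M - H)ᵀ * (M - H)).trace := trace_one_sub_mul_transpose_mul_le hX _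

end Matrix

/-- Davis–Kahan style corollary: there is an orthogonal `Z` with
`‖U₁ − XZ‖_F ≤ √2 ‖M‖_F sin(M,H(X)) / |λₖ|`. -/
theorem eigenvector_basis_approx
    (n k : ℕ) (hk0 : 0 < k) (hk : k ≤ n)
    (U : Matrix (Fin n) (Fin n) ℝ) (hU : Uᵀ * U = 1)
    (lam : Fin n → ℝ)
    (hmono : ∀ i j : Fin n, i ≤ j → |lam j| ≤ |lam i|)
    (M : Matrix (Fin n) (Fin n) ℝ)
    (hM : M = U * Matrix.diagonal lam * Uᵀ)
    (lamk : ℝ) (hlamk : lamk = lam ⟨k - 1, by omega⟩) (hlamk0 : lamk ≠ 0)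
    (U1 : Matrix (Fin n) (Fin k) ℝ)
    (hU1 : ∀ (i : Fin n) (j : Fin k), U1 i j = U i (Fin.castLE hk j))
    (X : Matrix (Fin n) (Fin k) ℝ) (hX : Xᵀ * X = 1)
    (q : Fin k → ℝ)
    (H : Matrix (Fin n) (Fin n) ℝ)
    (hH : H = ∑ i : Fin k, q i • vecMulVec (fun r => X r i) (fun r => X r i))
    (s : ℝ)
    (hs : s = Real.sqrt (∑ r, ∑ c, (M r c - H r c) ^ 2) /
              Real.sqrt (∑ r, ∑ c, (M r c) ^ 2)) :
    ∃ Z : Matrix (Fin k) (Fin k) ℝ, Zᵀ * Z = 1 ∧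
      Real.sqrt (∑ r, ∑ c, (U1 r c - (X * Z) r c) ^ 2) ≤
        Real.sqrt 2 * Real.sqrt (∑ r, ∑ c, (M r c) ^ 2) / |lamk| * s := by
  have hU1eq : U1 = U.submatrix id (Fin.castLE hk) := by ext; exact hU1 _ _
  have hU1o : U1ᵀ * U1 = 1 :=
    hU1eq ▸ transpose_submatrix_mul_submatrix_eq_one hU (Fin.castLE_injective hk)
  have hMU : M * U = U * diagonal lam := by rw [hM, Matrix.mul_assoc _ Uᵀ U, hU, Matrix.mul_one]
  have hMU1 : M * U1 = U1 * diagonal (lam ∘ Fin.castLE hk) :=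
    hU1eq ▸ mul_submatrix_eq_submatrix_mul_diagonal hMU
  have hPH : (1 - X * Xᵀ) * H = 0 := hH ▸ one_sub_mul_transpose_mul_sum_smul_vecMulVec hX q
  have hμ : ∀ j, |lamk| ≤ |(lam ∘ Fin.castLE hk) j| := fun j =>
    hlamk ▸ hmono _ _ (by simp only [Fin.le_def, Fin.val_castLE]; omega)
  have hM0 : M ≠ 0 :=
    ne_zero_of_mul_eq_mul_diagonal hU1o hMU1 (j := ⟨k - 1, by omega⟩) (hlamk ▸ hlamk0)
  obtain ⟨Z, hZ, hdist⟩ := exists_orthogonal_trace_sub_mul_le hX hU1o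
  have hDK := sq_mul_trace_le_of_mul_eq_mul_diagonal hX hU1o hMU1 hPH hμ
  refine ⟨Z, hZ, ?_⟩
  simp only [← Matrix.sub_apply, sum_sum_sq_eq_trace_transpose_mul_self] at hs ⊢
  have hMpos := trace_transpose_mul_self_pos hM0
  have hlam : 0 < |lamk| := abs_pos.mpr hlamk0
  calc √((U1 - X * Z)ᵀ * (U1 - X * Z)).trace
      ≤ √2 * √((M - H)ᵀ * (M - H)).trace / |lamk| := by
        rw [le_div_iff₀ hlam, ← Real.sqrt_sq_eq_abs,
          ← Real.sqrt_mul (trace_transpose_mul_self_nonneg _), ← Real.sqrt_mul zero_le_two]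
        exact Real.sqrt_le_sqrt (by nlinarith)
    _ = √2 * √(Mᵀ * M).trace / |lamk| * s := by
        rw [hs]
        field_simp
end

section
/- For n×k matrices U₁, X with orthonormal columns and X_⊥ completing X to an orthogonal n×n matrix [X, X_⊥], one has min_{Z orthogonal k×k} ‖U₁ − XZ‖_F ≤ √2 ‖X_⊥ᵀU₁‖_F. -/
/-!
Put `A = Xᵀ U₁`. Completeness of `[X, X_⊥]` gives `(X_⊥ᵀ U₁)ᵀ (X_⊥ᵀ U₁) = 1 - Aᵀ A`, so
`‖X_⊥ᵀ U₁‖² = k - tr (Aᵀ A)`, while `‖U₁ - X Z‖² = 2 k - 2 tr (Zᵀ A)` for orthogonal `Z`.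
Choose `Z` maximising `tr (Zᵀ A)` over the compact orthogonal group. Then `B = Zᵀ A` cannot be
improved by any further orthogonal factor; testing plane rotations shows that `B` is symmetric and
testing reflections that it is positive semidefinite. Hence `B² = Aᵀ A ≤ 1`, the eigenvalues of
`B` lie in `[0, 1]`, and `tr (Aᵀ A) = tr (B²) ≤ tr B`.
-/

open Matrix Finset

section FrobeniusSum

variable {m n : Type*} [Fintype m] [Fintype n]

lemma sum_sq_eq_trace_transpose_mul (M : Matrix m n ℝ) :
    ∑ r, ∑ c, M r c ^ 2 = (Mᵀ * M).trace := by
  simp only [trace, Matrix.diag, mul_apply, transpose_apply, sq]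
  exact Finset.sum_comm

lemma sum_sq_sub_of_transpose_mul_self_eq_one [DecidableEq n] {U V : Matrix m n ℝ}
    (hU : Uᵀ * U = 1) (hV : Vᵀ * V = 1) :
    ∑ r, ∑ c, (U r c - V r c) ^ 2 = 2 * Fintype.card n - 2 * (Vᵀ * U).trace := by
  have h := sum_sq_eq_trace_transpose_mul (U - V)
  simp only [Matrix.sub_apply] at h
  rw [h, transpose_sub, Matrix.sub_mul, Matrix.mul_sub, Matrix.mul_sub, hU, hV, trace_sub,
    trace_sub, trace_sub, trace_one, ← trace_transpose (Uᵀ * V), transpose_mul,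
    transpose_transpose]
  ring

end FrobeniusSum

section OrthogonalGroup

variable {ι : Type*} [Fintype ι] [DecidableEq ι]

lemma isCompact_orthogonalGroup : IsCompact (orthogonalGroup ι ℝ : Set (Matrix ι ι ℝ)) := by
  have hbox : IsCompact (Set.univ.pi fun _ : ι => Set.univ.pi fun _ : ι => Set.Icc (-1 : ℝ) 1) :=
    isCompact_univ_pi fun _ => isCompact_univ_pi fun _ => isCompact_Icc
  exact hbox.of_isClosed_subset (isClosed_unitary (R := Matrix ι ι ℝ))
    fun Z hZ i _ j _ => abs_le.mp (entry_norm_bound_of_unitary hZ i j)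

lemma exists_isMaxOn_trace_transpose_mul (A : Matrix ι ι ℝ) :
    ∃ Z ∈ orthogonalGroup ι ℝ, IsMaxOn (fun W => (Wᵀ * A).trace) (orthogonalGroup ι ℝ) Z :=
  isCompact_orthogonalGroup.exists_isMaxOn ⟨1, one_mem _⟩
    (continuous_id.matrix_transpose.matrix_mul continuous_const).matrix_trace.continuousOn

lemma isMaxOn_trace_transpose_mul_one {A Z : Matrix ι ι ℝ} (hZ : Z ∈ orthogonalGroup ι ℝ)
    (hmax : IsMaxOn (fun W => (Wᵀ * A).trace) (orthogonalGroup ι ℝ) Z) :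
    IsMaxOn (fun R => (Rᵀ * (Zᵀ * A)).trace) (orthogonalGroup ι ℝ) 1 := by
  refine isMaxOn_iff.mpr fun R hR => ?_
  have := isMaxOn_iff.mp hmax (Z * R) (mul_mem hZ hR)
  simpa only [transpose_mul, transpose_one, one_mul, Matrix.mul_assoc] using this

/-- `P` is the projection onto a plane and `K` the rotation by a right angle within it. -/
lemma one_add_smul_add_smul_mem_orthogonalGroup {P K : Matrix ι ι ℝ} (hP : Pᵀ = P)
    (hK : Kᵀ = -K) (hPP : P * P = P) (hKK : K * K = -P) (hPK : P * K = K * P) {c s : ℝ}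
    (hcs : c ^ 2 + s ^ 2 = 1) : 1 + (c - 1) • P + s • K ∈ orthogonalGroup ι ℝ := by
  rw [mem_orthogonalGroup_iff', transpose_add, transpose_add, transpose_one, transpose_smul,
    transpose_smul, hP, hK, smul_neg, ← sub_eq_add_neg]
  calc (1 + (c - 1) • P - s • K) * (1 + (c - 1) • P + s • K)
      = 1 + (2 * (c - 1)) • P + ((c - 1) ^ 2) • (P * P) - (s ^ 2) • (K * K)
          + ((c - 1) * s) • (P * K - K * P) := by
        simp only [mul_add, add_mul, sub_mul, mul_sub, one_mul, mul_one, smul_mul_assoc,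
          mul_smul_comm, smul_smul, smul_sub]
        module
    _ = 1 + (c ^ 2 + s ^ 2 - 1) • P := by
        rw [hPP, hKK, hPK, sub_self, smul_zero, add_zero]
        module
    _ = 1 := by rw [hcs, sub_self, zero_smul, add_zero]

lemma one_sub_two_smul_mem_orthogonalGroup {P : Matrix ι ι ℝ} (hP : Pᵀ = P) (hPP : P * P = P) :
    1 - (2 : ℝ) • P ∈ orthogonalGroup ι ℝ := by
  rw [mem_orthogonalGroup_iff', transpose_sub, transpose_one, transpose_smul, hP]
  calc (1 - (2 : ℝ) • P) * (1 - (2 : ℝ) • P) = 1 - (4 : ℝ) • P + (4 : ℝ) • (P * P) := by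
        simp only [mul_sub, sub_mul, one_mul, mul_one, smul_mul_assoc, mul_smul_comm]
        module
    _ = 1 := by rw [hPP]; module

end OrthogonalGroup

lemma eq_zero_of_forall_sq_add_sq_eq_one {d e : ℝ}
    (h : ∀ c s : ℝ, c ^ 2 + s ^ 2 = 1 → (c - 1) * d ≤ s * e) : e = 0 := by
  -- rational parametrisation of the unit circle turns `h` into `0 ≤ d t² + e t` for all `t`
  have hquad (t : ℝ) : 0 ≤ d * (t * t) + e * t + 0 := by
    have hpos : 0 < 1 + t ^ 2 := by positivity
    have := h ((1 - t ^ 2) / (1 + t ^ 2)) (2 * t / (1 + t ^ 2)) (by field_simp; ring)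
    rw [div_sub_one hpos.ne', div_mul_eq_mul_div, div_mul_eq_mul_div,
      div_le_div_iff_of_pos_right hpos] at this
    nlinarith
  have := discrim_le_zero hquad
  rw [discrim] at this
  nlinarith [sq_nonneg e]

section MaximalTrace

variable {ι : Type*} [Fintype ι] [DecidableEq ι]

lemma mul_trace_le_of_isMaxOn {B P K : Matrix ι ι ℝ}
    (hB : IsMaxOn (fun R => (Rᵀ * B).trace) (orthogonalGroup ι ℝ) 1) (hP : Pᵀ = P)
    (hK : Kᵀ = -K) (hPP : P * P = P) (hKK : K * K = -P) (hPK : P * K = K * P) {c s : ℝ}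
    (hcs : c ^ 2 + s ^ 2 = 1) : (c - 1) * (P * B).trace ≤ s * (K * B).trace := by
  have := isMaxOn_iff.mp hB _ (one_add_smul_add_smul_mem_orthogonalGroup hP hK hPP hKK hPK hcs)
  rw [transpose_add, transpose_add, transpose_one, transpose_smul, transpose_smul, hP, hK,
    add_mul, add_mul, one_mul, smul_mul_assoc, smul_mul_assoc, trace_add, trace_add, trace_smul,
    trace_smul, neg_mul, trace_neg, smul_neg, smul_eq_mul, smul_eq_mul] at this
  linarith

lemma isSymm_of_isMaxOn {B : Matrix ι ι ℝ}
    (hB : IsMaxOn (fun R => (Rᵀ * B).trace) (orthogonalGroup ι ℝ) 1) : B.IsSymm := by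
  ext i j
  rcases eq_or_ne i j with rfl | hij
  · rfl
  set P : Matrix ι ι ℝ := single i i 1 + single j j 1
  set K : Matrix ι ι ℝ := single i j 1 - single j i 1
  have hP : Pᵀ = P := by simp [P]
  have hK : Kᵀ = -K := by simp [K]
  have hPP : P * P = P := by
    simp [P, add_mul, mul_add, single_mul_single_of_ne, hij, hij.symm]
  have hKK : K * K = -P := by
    simp [P, K, sub_mul, mul_sub, single_mul_single_of_ne, hij, hij.symm]
    abel
  have hPK : P * K = K * P := by
    simp [P, K, add_mul, mul_add, sub_mul, mul_sub, single_mul_single_of_ne, hij, hij.symm,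
      neg_add_eq_sub]
  have hKB : (K * B).trace = B j i - B i j := by
    simp [K, sub_mul, trace_single_mul]
  have hKB0 := eq_zero_of_forall_sq_add_sq_eq_one fun c s hcs =>
    mul_trace_le_of_isMaxOn hB hP hK hPP hKK hPK hcs
  rwa [hKB, sub_eq_zero] at hKB0

lemma trace_mul_nonneg_of_isMaxOn {B P : Matrix ι ι ℝ}
    (hB : IsMaxOn (fun R => (Rᵀ * B).trace) (orthogonalGroup ι ℝ) 1) (hP : Pᵀ = P)
    (hPP : P * P = P) : 0 ≤ (P * B).trace := by
  have := isMaxOn_iff.mp hB _ (one_sub_two_smul_mem_orthogonalGroup hP hPP)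
  rw [transpose_sub, transpose_one, transpose_smul, hP, sub_mul, one_mul, smul_mul_assoc,
    trace_sub, trace_smul, smul_eq_mul] at this
  linarith

lemma posSemidef_of_isMaxOn {B : Matrix ι ι ℝ}
    (hB : IsMaxOn (fun R => (Rᵀ * B).trace) (orthogonalGroup ι ℝ) 1) : B.PosSemidef := by
  refine posSemidef_iff_dotProduct_mulVec.mpr ⟨isSymm_of_isMaxOn hB, fun v => ?_⟩
  rw [star_trivial]
  rcases eq_or_ne v 0 with rfl | hv
  · simp
  have hvv : 0 < v ⬝ᵥ v :=
    (dotProduct_self_star_nonneg v).lt_of_ne (Ne.symm (dotProduct_self_eq_zero.not.mpr hv))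
  set P : Matrix ι ι ℝ := (v ⬝ᵥ v)⁻¹ • vecMulVec v v
  have hPP : P * P = P := by
    simp only [P, smul_mul_smul, vecMulVec_mul_vecMulVec, vecMulVec_smul, smul_smul]
    field_simp
  have := trace_mul_nonneg_of_isMaxOn hB (P := P) (by simp [P, transpose_vecMulVec]) hPP
  rw [smul_mul_assoc, trace_smul, vecMulVec_mul, trace_vecMulVec, dotProduct_comm v (v ᵥ* B),
    ← dotProduct_mulVec, smul_eq_mul] at this
  exact nonneg_of_mul_nonneg_right this (inv_pos.mpr hvv)

end MaximalTrace

lemma trace_mul_self_le_trace {ι : Type*} [Fintype ι] [DecidableEq ι] {B : Matrix ι ι ℝ}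
    (hB : B.PosSemidef) (hB1 : (1 - B * B).PosSemidef) : (B * B).trace ≤ B.trace := by
  set U := hB.1.eigenvectorUnitary
  set d := hB.1.eigenvalues
  set φ := Unitary.conjStarAlgAut ℝ (Matrix ι ι ℝ) U
  have htrace (M : Matrix ι ι ℝ) : (φ M).trace = M.trace := by
    rw [Unitary.conjStarAlgAut_apply, trace_mul_cycle, Unitary.coe_star_mul_self, one_mul]
  have hBd : B = φ (diagonal d) := by
    simpa only [RCLike.ofReal_real_eq_id, Function.id_comp] using hB.1.spectral_theorem
  have hd1 : (diagonal fun i => 1 - d i * d i).PosSemidef := by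
    have : 1 - B * B = U * diagonal (fun i => 1 - d i * d i) * star (U : Matrix ι ι ℝ) := by
      rw [hBd, ← map_mul, ← map_one φ, ← map_sub, diagonal_mul_diagonal, ← diagonal_one,
        diagonal_sub]
      rfl
    rwa [this, (Unitary.isUnit_coe (U := U)).posSemidef_star_right_conjugate_iff] at hB1
  rw [hBd, ← map_mul, htrace, htrace, diagonal_mul_diagonal, trace_diagonal, trace_diagonal]
  refine Finset.sum_le_sum fun i _ => ?_
  have h0 : 0 ≤ d i := hB.eigenvalues_nonneg i
  have h1 : 0 ≤ 1 - d i * d i := posSemidef_diagonal_iff.mp hd1 i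
  nlinarith

theorem orthogonal_procrustes_bound_general
    (n k m : ℕ)
    (U1 X : Matrix (Fin n) (Fin k) ℝ) (Xp : Matrix (Fin n) (Fin m) ℝ)
    (hU1 : U1ᵀ * U1 = 1) (hX : Xᵀ * X = 1)
    (hcomplete : X * Xᵀ + Xp * Xpᵀ = 1) :
    ∃ Z : Matrix (Fin k) (Fin k) ℝ, Zᵀ * Z = 1 ∧
      Real.sqrt (∑ r, ∑ c, (U1 r c - (X * Z) r c) ^ 2) ≤
        Real.sqrt 2 * Real.sqrt (∑ r, ∑ c, ((Xpᵀ * U1) r c) ^ 2) := by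
  set A := Xᵀ * U1
  have hgram : (Xpᵀ * U1)ᵀ * (Xpᵀ * U1) = 1 - Aᵀ * A := by
    rw [transpose_mul, transpose_transpose, Matrix.mul_assoc, ← Matrix.mul_assoc Xp,
      eq_sub_of_add_eq' hcomplete, Matrix.sub_mul, Matrix.mul_sub, Matrix.one_mul, hU1]
    simp only [A, transpose_mul, transpose_transpose, Matrix.mul_assoc]
  obtain ⟨Z, hZ, hmax⟩ := exists_isMaxOn_trace_transpose_mul A
  set B := Zᵀ * A
  have hB : IsMaxOn (fun R => (Rᵀ * B).trace) (orthogonalGroup (Fin k) ℝ) 1 :=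
    isMaxOn_trace_transpose_mul_one hZ hmax
  have hBB : B * B = Aᵀ * A := calc
    B * B = Bᵀ * B := by rw [isSymm_of_isMaxOn hB]
    _ = Aᵀ * (Z * Zᵀ) * A := by simp only [B, transpose_mul, transpose_transpose, Matrix.mul_assoc]
    _ = Aᵀ * A := by rw [(mem_orthogonalGroup_iff _ _).mp hZ, Matrix.mul_one]
  have h1B : (1 - B * B).PosSemidef := by
    rw [hBB, ← hgram, ← conjTranspose_eq_transpose_of_trivial]
    exact posSemidef_conjTranspose_mul_self _
  have htr : (Aᵀ * A).trace ≤ B.trace :=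
    hBB ▸ trace_mul_self_le_trace (posSemidef_of_isMaxOn hB) h1B
  have hXZ : (X * Z)ᵀ * (X * Z) = 1 := by
    rw [transpose_mul, Matrix.mul_assoc, ← Matrix.mul_assoc Xᵀ, hX, Matrix.one_mul,
      (mem_orthogonalGroup_iff' _ _).mp hZ]
  have hcross : (X * Z)ᵀ * U1 = B := by simp only [B, A, transpose_mul, Matrix.mul_assoc]
  refine ⟨Z, (mem_orthogonalGroup_iff' _ _).mp hZ, ?_⟩
  rw [← Real.sqrt_mul zero_le_two, sum_sq_sub_of_transpose_mul_self_eq_one hU1 hXZ, hcross,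
    sum_sq_eq_trace_transpose_mul, hgram, trace_sub, trace_one]
  exact Real.sqrt_le_sqrt (by linarith)

/-- `min_{Z orthogonal} ‖U₁ − XZ‖_F ≤ √2 ‖X⊥ᵀU₁‖_F`. -/
theorem orthogonal_procrustes_bound
    (n k m : ℕ)
    (U1 X : Matrix (Fin n) (Fin k) ℝ) (Xp : Matrix (Fin n) (Fin m) ℝ)
    (hU1 : U1ᵀ * U1 = 1) (hX : Xᵀ * X = 1) (hXp : Xpᵀ * Xp = 1)
    (hXXp : Xᵀ * Xp = 0) (hcomplete : X * Xᵀ + Xp * Xpᵀ = 1) :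
    ∃ Z : Matrix (Fin k) (Fin k) ℝ, Zᵀ * Z = 1 ∧
      Real.sqrt (∑ r, ∑ c, (U1 r c - (X * Z) r c) ^ 2) ≤
        Real.sqrt 2 * Real.sqrt (∑ r, ∑ c, ((Xpᵀ * U1) r c) ^ 2) :=
  orthogonal_procrustes_bound_general n k m U1 X Xp hU1 hX hcomplete
end

section
/- Eigenvalues of the average SBM modularity matrix: with M̄ the average Newman–Girvan modularity matrix of the SBM with parameters (Θ, B), N = Diag(√n₁,…,√n_k), δᵢ = ∑ⱼ b_{ij}nⱼ, and ν = ∑_{i,j} b_{ij}nᵢnⱼ, the nonzero eigenvalues of M̄ coincide (with multiplicities) with the nonzero eigenvalues of the k×k matrix N(B − δδᵀ/ν)N. Furthermore, if (λ, v) is an eigenpair of N(B − δδᵀ/ν)N, then z = N⁻¹v ×× 1 (the block-constant vector whose entries on block j equal vⱼ/√nⱼ) satisfies M̄z = λz. -/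
/-!
With `Θ` the membership matrix, the expected degree of a node depends only on its block, so
`M̄ = Θ C Θᵀ` with `C = B − δδᵀ/ν`. Since `ΘᵀΘ = N²`, the identity `χ(PQ) = X^(n-k) χ(QP)`
turns `χ(Θ · CΘᵀ)` into `X^(n-k) χ(CN²) = X^(n-k) χ(NCN)`. For the eigenvectors, `Θᵀ` maps
`z = N⁻¹v ×× 1` to `Nv`, so `M̄z = Θ(CNv)`; on the block `b` of any node, `√n_b ≠ 0` and the
eigen-equation `N(CNv) = λv` give `(CNv)_b = λ v_b / √n_b`.
-/

open Matrix Finset Polynomial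

namespace Matrix

variable {ι κ : Type*} [DecidableEq κ]

def membershipMatrix (R : Type*) [Zero R] [One R] (g : ι → κ) : Matrix ι κ R :=
  of fun i b => if g i = b then 1 else 0

section Semiring

variable {R : Type*} [Semiring R] (g : ι → κ)

theorem membershipMatrix_mulVec [Fintype κ] (w : κ → R) : membershipMatrix R g *ᵥ w = w ∘ g := by
  ext i
  simp [membershipMatrix, mulVec, dotProduct]

theorem membershipMatrix_mul_mul_transpose [Fintype κ] (A : Matrix κ κ R) :
    membershipMatrix R g * A * (membershipMatrix R g)ᵀ = A.submatrix g g := by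
  ext i j
  simp [membershipMatrix, mul_apply]

variable [Fintype ι]

def blockSize (b : κ) : ℕ := #{i | g i = b}

theorem membershipMatrix_transpose_mul_self :
    (membershipMatrix R g)ᵀ * membershipMatrix R g = diagonal fun b => (blockSize g b : R) := by
  ext a b
  rcases eq_or_ne a b with rfl | hab
  · simp [membershipMatrix, mul_apply, blockSize, ← ite_and, Finset.sum_boole]
  · simp only [membershipMatrix, mul_apply, transpose_apply, of_apply, diagonal_apply_ne _ hab]
    exact Finset.sum_eq_zero fun i _ => by grind

theorem membershipMatrix_transpose_mulVec_comp [Fintype κ] (w : κ → R) :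
    (membershipMatrix R g)ᵀ *ᵥ (w ∘ g) = fun b => blockSize g b * w b := by
  ext b
  rw [← membershipMatrix_mulVec, mulVec_mulVec, membershipMatrix_transpose_mul_self,
    mulVec_diagonal]

theorem submatrix_mulVec_one [Fintype κ] (A : Matrix κ κ R) :
    A.submatrix g g *ᵥ 1 = (A *ᵥ fun b => (blockSize g b : R)) ∘ g := by
  have hone : (1 : ι → R) = (1 : κ → R) ∘ g := rfl
  rw [← membershipMatrix_mul_mul_transpose, ← mulVec_mulVec, ← mulVec_mulVec, hone,
    membershipMatrix_transpose_mulVec_comp, membershipMatrix_mulVec]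
  simp

end Semiring

variable [Fintype ι] (g : ι → κ)

theorem blockSize_apply_pos (i : ι) : 0 < blockSize g (g i) :=
  Finset.card_pos.mpr ⟨i, by simp⟩

variable [Fintype κ]

/-- The matrix `N = Diag(√n₁, …, √n_k)` of the paper. -/
noncomputable def sqrtBlockSize : Matrix κ κ ℝ :=
  diagonal fun b => √(blockSize g b)

theorem sqrtBlockSize_mulVec_apply (u : κ → ℝ) (b : κ) :
    (sqrtBlockSize g *ᵥ u) b = √(blockSize g b) * u b :=
  mulVec_diagonal _ _ _

theorem sqrtBlockSize_mul_self :
    sqrtBlockSize g * sqrtBlockSize g = (membershipMatrix ℝ g)ᵀ * membershipMatrix ℝ g := by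
  rw [sqrtBlockSize, diagonal_mul_diagonal, membershipMatrix_transpose_mul_self]
  simp

theorem charpoly_submatrix_eq_X_pow_mul_charpoly [DecidableEq ι] (C : Matrix κ κ ℝ)
    (hcard : Fintype.card κ ≤ Fintype.card ι) :
    (C.submatrix g g).charpoly = X ^ (Fintype.card ι - Fintype.card κ) *
      (sqrtBlockSize g * C * sqrtBlockSize g).charpoly := by
  rw [← membershipMatrix_mul_mul_transpose (R := ℝ), Matrix.mul_assoc,
    charpoly_mul_comm_of_le _ _ hcard, Matrix.mul_assoc, ← sqrtBlockSize_mul_self,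
    ← Matrix.mul_assoc, charpoly_mul_comm, Matrix.mul_assoc]

/-- The block-constant vector `N⁻¹v ×× 1` of the paper. -/
noncomputable def blockLift (v : κ → ℝ) : ι → ℝ :=
  fun i => v (g i) / √(blockSize g (g i))

theorem membershipMatrix_transpose_mulVec_blockLift (v : κ → ℝ) :
    (membershipMatrix ℝ g)ᵀ *ᵥ blockLift g v = sqrtBlockSize g *ᵥ v := by
  rw [show blockLift g v = (fun b => v b / √(blockSize g b)) ∘ g from rfl,
    membershipMatrix_transpose_mulVec_comp]
  ext b
  rw [sqrtBlockSize_mulVec_apply, mul_div_left_comm, Real.div_sqrt, mul_comm]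

theorem submatrix_mulVec_blockLift_of_mulVec_eq_smul (C : Matrix κ κ ℝ) {lam : ℝ} {v : κ → ℝ}
    (hv : (sqrtBlockSize g * C * sqrtBlockSize g) *ᵥ v = lam • v) :
    C.submatrix g g *ᵥ blockLift g v = lam • blockLift g v := by
  ext i
  have hsqrt : √(blockSize g (g i)) ≠ 0 := by
    have := blockSize_apply_pos g i
    positivity
  have hvi : √(blockSize g (g i)) * (C *ᵥ sqrtBlockSize g *ᵥ v) (g i) = lam * v (g i) := by
    rw [← sqrtBlockSize_mulVec_apply, mulVec_mulVec, mulVec_mulVec, hv,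
      Pi.smul_apply, smul_eq_mul]
  rw [← membershipMatrix_mul_mul_transpose (R := ℝ), ← mulVec_mulVec, ← mulVec_mulVec,
    membershipMatrix_transpose_mulVec_blockLift, membershipMatrix_mulVec, Function.comp_apply,
    Pi.smul_apply, smul_eq_mul, blockLift, mul_div_assoc', eq_div_iff hsqrt, ← hvi, mul_comm]

end Matrix

theorem sbm_modularity_eigenvalues_general
    (n k : ℕ) (hkn : k ≤ n) (g : Fin n → Fin k)
    (B : Matrix (Fin k) (Fin k) ℝ)
    (m : Fin k → ℕ)
    (hm : ∀ b : Fin k, m b = (Finset.univ.filter fun i => g i = b).card)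
    (Abar : Matrix (Fin n) (Fin n) ℝ)
    (hAbar : Abar = Matrix.of fun i j => B (g i) (g j))
    (dbar : Fin n → ℝ) (hdbar : dbar = Abar *ᵥ 1)
    (ν : ℝ)
    (Mbar : Matrix (Fin n) (Fin n) ℝ)
    (hMbar : Mbar = Abar - Matrix.of fun i j => dbar i * dbar j / ν)
    (δ : Fin k → ℝ) (hδ : ∀ b : Fin k, δ b = ∑ c, B b c * m c)
    (N : Matrix (Fin k) (Fin k) ℝ)
    (hN : N = Matrix.diagonal fun b => Real.sqrt (m b))
    (S : Matrix (Fin k) (Fin k) ℝ)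
    (hS : S = N * (B - Matrix.of fun a b => δ a * δ b / ν) * N) :
    Mbar.charpoly = Polynomial.X ^ (n - k) * S.charpoly ∧
    ∀ (lam : ℝ) (v : Fin k → ℝ), S *ᵥ v = lam • v →
      Mbar *ᵥ (fun i => v (g i) / Real.sqrt (m (g i))) =
        lam • fun i => v (g i) / Real.sqrt (m (g i)) := by
  obtain rfl : m = blockSize g := funext hm
  have hdegree : dbar = δ ∘ g := by
    rw [hdbar, hAbar, show δ = B *ᵥ fun b => (blockSize g b : ℝ) from funext hδ,
      ← submatrix_mulVec_one]
    rfl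
  have hMbar_eq : Mbar = (B - of fun a b => δ a * δ b / ν).submatrix g g := by
    rw [hMbar, hAbar, hdegree, submatrix_sub]
    rfl
  obtain rfl : N = sqrtBlockSize g := hN
  subst hMbar_eq hS
  refine ⟨?_, fun lam v hv => submatrix_mulVec_blockLift_of_mulVec_eq_smul g _ hv⟩
  simpa only [Fintype.card_fin] using
    charpoly_submatrix_eq_X_pow_mul_charpoly g _ (by simpa only [Fintype.card_fin] using hkn)

/-- Nonzero eigenvalues of the average SBM modularity matrix `M̄` coincide, with
multiplicities, with those of the `k×k` matrix `N(B − δδᵀ/ν)N` (stated via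
characteristic polynomials), and eigenpairs of the small matrix lift to
eigenpairs of `M̄` via block-constant vectors. -/
theorem sbm_modularity_eigenvalues
    (n k : ℕ) (hkn : k ≤ n) (g : Fin n → Fin k)
    (B : Matrix (Fin k) (Fin k) ℝ) (hB : B.IsSymm)
    (m : Fin k → ℕ)
    (hm : ∀ b : Fin k, m b = (Finset.univ.filter fun i => g i = b).card)
    (hm0 : ∀ b : Fin k, 0 < m b)
    (Abar : Matrix (Fin n) (Fin n) ℝ)
    (hAbar : Abar = Matrix.of fun i j => B (g i) (g j))
    (dbar : Fin n → ℝ) (hdbar : dbar = Abar *ᵥ 1)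
    (ν : ℝ) (hν : ν = ∑ a, ∑ b, B a b * m a * m b) (hνpos : 0 < ν)
    (Mbar : Matrix (Fin n) (Fin n) ℝ)
    (hMbar : Mbar = Abar - Matrix.of fun i j => dbar i * dbar j / ν)
    (δ : Fin k → ℝ) (hδ : ∀ b : Fin k, δ b = ∑ c, B b c * m c)
    (N : Matrix (Fin k) (Fin k) ℝ)
    (hN : N = Matrix.diagonal fun b => Real.sqrt (m b))
    (S : Matrix (Fin k) (Fin k) ℝ)
    (hS : S = N * (B - Matrix.of fun a b => δ a * δ b / ν) * N) :
    Mbar.charpoly = Polynomial.X ^ (n - k) * S.charpoly ∧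
    ∀ (lam : ℝ) (v : Fin k → ℝ), S *ᵥ v = lam • v →
      Mbar *ᵥ (fun i => v (g i) / Real.sqrt (m (g i))) =
        lam • fun i => v (g i) / Real.sqrt (m (g i)) :=
  sbm_modularity_eigenvalues_general n k hkn g B m hm Abar hAbar dbar hdbar ν Mbar hMbar δ hδ N hN S
    hS
end
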